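/- Suppose κ > ℵ₀ and D is a κ-complete nonprincipal ultrafilter on the cardinal κ (so κ is measurable). Let θ₁, θ₂ be regular cardinals such that either θ₁ < κ, or both θ₁ ≤ κ and θ₂ ≤ κ. Then for every (θ₁+θ₂)⁺-saturated dense linear order J without endpoints, no pair of sequences of functions from κ to J represents a (θ₁, θ₂)-cut of J^κ/D. -/

import Mathlib

/-!
Fill the gap coordinatewise, using the saturation of `J`: it suffices to choose for each
coordinate `i` sets of indices `S₁ i`, `S₂ i` on which `f · i` lies below `g · i`, such that
every index belongs to its set for `D`-almost all `i`. If `θ₁ < κ`, `κ`-completeness lets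
`S₁ i` be everything and `S₂ i` the `b` above all of `f · i` (symmetrically if `θ₂ < κ`). If
`θ₁ = θ₂ = κ`, initial segments have size `< κ` by regularity, and one takes for both the `a`
such that `f` stays below `g` up to `a`.
-/

open Cardinal Set

/-- `f <_D g` : the set of coordinates where `f i < g i` belongs to the ultrafilter `D`. -/
def ltD {ι J : Type} [LinearOrder J] (D : Ultrafilter ι) (f g : ι → J) : Prop :=
  {i | f i < g i} ∈ D

/-- An ultrafilter is nonprincipal iff it contains the complement of every singleton. -/
def Nonprincipal {ι : Type} (D : Ultrafilter ι) : Prop :=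
  ∀ i : ι, ({i}ᶜ : Set ι) ∈ D

/-- `μ`-completeness: any intersection of fewer than `μ` members of `D` belongs to `D`. -/
def IsCompleteUF (μ : Cardinal) {ι : Type} (D : Ultrafilter ι) : Prop :=
  ∀ s : Set (Set ι), #s < μ → (∀ A ∈ s, A ∈ D) → ⋂₀ s ∈ D

/-- A uniform ultrafilter: every member has full cardinality. -/
def IsUniformUF {ι : Type} (D : Ultrafilter ι) : Prop :=
  ∀ A ∈ D, #A = #ι

/-- The sequences `f` (indexed by `T₁`) and `g` (indexed by `T₂`) represent a
`(T₁, T₂)`-cut of the ultrapower `J^ι/D`: `f` is `<_D`-increasing, `g` is `<_D`-decreasing,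
every `f a` is `<_D`-below every `g b`, and no element fills the cut. -/
def RepCut {ι J : Type} [LinearOrder J] {T₁ T₂ : Type} [LinearOrder T₁] [LinearOrder T₂]
    (D : Ultrafilter ι) (f : T₁ → ι → J) (g : T₂ → ι → J) : Prop :=
  (∀ a b : T₁, a < b → ltD D (f a) (f b)) ∧
  (∀ a b : T₂, a < b → ltD D (g b) (g a)) ∧
  (∀ (a : T₁) (b : T₂), ltD D (f a) (g b)) ∧
  ¬∃ h : ι → J, (∀ a : T₁, ltD D (f a) h) ∧ ∀ b : T₂, ltD D h (g b)

/-- `τ⁺`-saturation of a dense linear order: any two sets of size `≤ τ`, one entirely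
below the other, can be separated by a point. -/
def SatPlus (τ : Cardinal) (J : Type) [LinearOrder J] : Prop :=
  ∀ A B : Set J, #A ≤ τ → #B ≤ τ → (∀ a ∈ A, ∀ b ∈ B, a < b) →
    ∃ t : J, (∀ a ∈ A, a < t) ∧ ∀ b ∈ B, t < b

open Filter

theorem IsCompleteUF.cardinalInterFilter {μ : Cardinal} {ι : Type} {D : Ultrafilter ι}
    (h : IsCompleteUF μ D) : CardinalInterFilter (D : Filter ι) μ :=
  ⟨h⟩

theorem Cardinal.mk_Iic_toType_ord_lt {c : Cardinal} (hc : ℵ₀ ≤ c) (a : c.ord.ToType) :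
    #(Iic a) < c := by
  simpa using mk_Iic_lt a (by simp) (by simpa using hc)

theorem SatPlus.exists_between_image {τ : Cardinal} {J T₁ T₂ : Type} [LinearOrder J]
    (hsat : SatPlus τ J) (hT₁ : #T₁ ≤ τ) (hT₂ : #T₂ ≤ τ) {x : T₁ → J} {y : T₂ → J}
    {s : Set T₁} {t : Set T₂} (hxy : ∀ a ∈ s, ∀ b ∈ t, x a < y b) :
    ∃ c, (∀ a ∈ s, x a < c) ∧ ∀ b ∈ t, c < y b := by
  obtain ⟨c, hxc, hcy⟩ := hsat (x '' s) (y '' t)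
    (mk_image_le.trans ((mk_set_le s).trans hT₁)) (mk_image_le.trans ((mk_set_le t).trans hT₂))
    (forall_mem_image.2 fun a ha ↦ forall_mem_image.2 fun b hb ↦ hxy a ha b hb)
  exact ⟨c, forall_mem_image.1 hxc, forall_mem_image.1 hcy⟩

section Filling

variable {ι J : Type} [LinearOrder J] {τ : Cardinal} {D : Ultrafilter ι}

theorem exists_between_of_sections {T₁ T₂ : Type} {f : T₁ → ι → J} {g : T₂ → ι → J}
    (hsat : SatPlus τ J) (hT₁ : #T₁ ≤ τ) (hT₂ : #T₂ ≤ τ)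
    (S₁ : ι → Set T₁) (S₂ : ι → Set T₂) (hS : ∀ i, ∀ a ∈ S₁ i, ∀ b ∈ S₂ i, f a i < g b i)
    (hS₁ : ∀ a, ∀ᶠ i in (D : Filter ι), a ∈ S₁ i) (hS₂ : ∀ b, ∀ᶠ i in (D : Filter ι), b ∈ S₂ i) :
    ∃ h : ι → J, (∀ a, ltD D (f a) h) ∧ ∀ b, ltD D h (g b) := by
  choose h hfh hhg using fun i ↦ hsat.exists_between_image hT₁ hT₂ (hS i)
  exact ⟨h, fun a ↦ (hS₁ a).mono fun i ↦ hfh i a, fun b ↦ (hS₂ b).mono fun i ↦ hhg i b⟩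

variable {μ : Cardinal} [CardinalInterFilter (D : Filter ι) μ]

theorem exists_between_of_mk_left_lt {T₁ T₂ : Type} {f : T₁ → ι → J} {g : T₂ → ι → J}
    (hsat : SatPlus τ J) (hT₁ : #T₁ ≤ τ) (hT₂ : #T₂ ≤ τ) (hT₁μ : #T₁ < μ)
    (hfg : ∀ a b, ltD D (f a) (g b)) :
    ∃ h : ι → J, (∀ a, ltD D (f a) h) ∧ ∀ b, ltD D h (g b) :=
  exists_between_of_sections hsat hT₁ hT₂ (fun _ ↦ univ) (fun i ↦ {b | ∀ a, f a i < g b i})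
    (fun _ a _ _ hb ↦ hb a) (fun _ ↦ univ_mem)
    (fun b ↦ (eventually_cardinal_forall hT₁μ).2 fun a ↦ hfg a b)

theorem exists_between_of_mk_right_lt {T₁ T₂ : Type} {f : T₁ → ι → J} {g : T₂ → ι → J}
    (hsat : SatPlus τ J) (hT₁ : #T₁ ≤ τ) (hT₂ : #T₂ ≤ τ) (hT₂μ : #T₂ < μ)
    (hfg : ∀ a b, ltD D (f a) (g b)) :
    ∃ h : ι → J, (∀ a, ltD D (f a) h) ∧ ∀ b, ltD D h (g b) :=
  exists_between_of_sections hsat hT₁ hT₂ (fun i ↦ {a | ∀ b, f a i < g b i}) (fun _ ↦ univ)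
    (fun _ _ ha b _ ↦ ha b) (fun a ↦ (eventually_cardinal_forall hT₂μ).2 fun b ↦ hfg a b)
    (fun _ ↦ univ_mem)

theorem exists_between_of_mk_Iic_lt {T : Type} [LinearOrder T] {f g : T → ι → J}
    (hsat : SatPlus τ J) (hT : #T ≤ τ) (hIic : ∀ a : T, #(Iic a) < μ)
    (hfg : ∀ a b, ltD D (f a) (g b)) :
    ∃ h : ι → J, (∀ a, ltD D (f a) h) ∧ ∀ b, ltD D h (g b) := by
  let S i : Set T := {a | ∀ x ∈ Iic a, ∀ y ∈ Iic a, f x i < g y i}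
  have hS a : ∀ᶠ i in (D : Filter ι), a ∈ S i :=
    (eventually_cardinal_ball (hIic a)).2 fun x _ ↦
      (eventually_cardinal_ball (hIic a)).2 fun y _ ↦ hfg x y
  refine exists_between_of_sections hsat hT hT S S (fun i a ha b hb ↦ ?_) hS hS
  rcases le_total a b with hab | hba
  · exact hb a hab b le_rfl
  · exact ha a le_rfl b hba

end Filling

theorem no_small_cut_of_measurable_general
    {ι : Type} (D : Ultrafilter ι)
    (hcomp : IsCompleteUF #ι D)
    (θ₁ θ₂ : Cardinal) (hθ₁ : θ₁.IsRegular)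
    (hcase : θ₁ < #ι ∨ (θ₁ ≤ #ι ∧ θ₂ ≤ #ι))
    (J : Type) [LinearOrder J]
    (hsat : SatPlus (θ₁ + θ₂) J) :
    ∀ (f : θ₁.ord.ToType → ι → J) (g : θ₂.ord.ToType → ι → J), ¬RepCut D f g := by
  rintro f g ⟨-, -, hfg, hgap⟩
  refine hgap ?_
  have := hcomp.cardinalInterFilter
  have hT₁ : #θ₁.ord.ToType ≤ θ₁ + θ₂ := by simp
  have hT₂ : #θ₂.ord.ToType ≤ θ₁ + θ₂ := by simp
  rcases hcase with hθ₁ι | ⟨hθ₁ι, hθ₂ι⟩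
  · exact exists_between_of_mk_left_lt hsat hT₁ hT₂ (by simpa) hfg
  rcases hθ₁ι.lt_or_eq with hθ₁ι | rfl
  · exact exists_between_of_mk_left_lt hsat hT₁ hT₂ (by simpa) hfg
  rcases hθ₂ι.lt_or_eq with hθ₂ι | rfl
  · exact exists_between_of_mk_right_lt hsat hT₁ hT₂ (by simpa) hfg
  exact exists_between_of_mk_Iic_lt hsat hT₁ (mk_Iic_toType_ord_lt hθ₁.aleph0_le) hfg

/-- Theorem 2.2: if `D` is a `κ`-complete nonprincipal ultrafilter on a
measurable cardinal `κ > ℵ₀`, and `θ₁, θ₂` are regular with `θ₁ < κ`, or `θ₁ ≤ κ` and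
`θ₂ ≤ κ`, then for every `(θ₁+θ₂)⁺`-saturated dense linear order `J` without endpoints,
no pair of sequences represents a `(θ₁, θ₂)`-cut of `J^κ/D`. -/
theorem no_small_cut_of_measurable
    {ι : Type} (D : Ultrafilter ι) (hD : Nonprincipal D)
    (hκ : ℵ₀ < #ι) (hcomp : IsCompleteUF #ι D)
    (θ₁ θ₂ : Cardinal) (hθ₁ : θ₁.IsRegular) (hθ₂ : θ₂.IsRegular)
    (hcase : θ₁ < #ι ∨ (θ₁ ≤ #ι ∧ θ₂ ≤ #ι))
    (J : Type) [LinearOrder J] [DenselyOrdered J] [NoMinOrder J] [NoMaxOrder J] [Nonempty J]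
    (hsat : SatPlus (θ₁ + θ₂) J) :
    ∀ (f : θ₁.ord.ToType → ι → J) (g : θ₂.ord.ToType → ι → J), ¬RepCut D f g :=
  no_small_cut_of_measurable_general D hcomp θ₁ θ₂ hθ₁ hcase J hsat
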